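/- Let K ⊆ [q]. If u ≤ u′ in the weak order on B_p and v ≤ v′ in the weak order with v, v′ ∈ B_{q,K}, then {x × y : x ∈ [u,u′], y ∈ [v,v′]} equals the weak-order interval [u × v, u′ × v′] in B_{p+q}. -/

import Mathlib

/-!
Encode `B_n` through its root system: the pair `(a, b)` with `|a| < b ≤ n` stands for the positive
root `e_b - e_a` (with `e_{-i} = -e_i`, `e_0 = 0`), and `ℓ(w)` is the number of positive roots that
`w` makes negative. Then `u ≤ v` in the weak order iff the inversion set of `u` is contained in that
of `v`.

For `w = x × y` the roots of `B_{p+q}` are the low roots (those of `x`), the high roots (those of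
`y`, shifted by `p`) and the mixed roots `e_b ± e_a` with `|a| ≤ p < b`, which are inversions
exactly when `b - p ∈ Nega(y)`. So on products the weak order is the product order, which gives one
inclusion. Conversely, if `w` lies in `[u × v, u' × v']` with `Nega(v) = Nega(v') = K`, its mixed
inversions are squeezed to be those with `b - p ∈ K`; hence `e_b - e_a` and `e_b + e_a` have the
same sign under `w`, which forces `|w a| < |w b|`. Counting then shows that `w` preserves the block
`[-p, p]`, so `w` itself is a product `x × y`.
-/

open Finset

open scoped Classical

/-- The hyperoctahedral group `𝔅ₙ`, realized as the set of those permutations `w` of `ℤ`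
that satisfy `w (-i) = - w i` for all `i` and fix every integer of absolute value `> n`.
One-line notation: `w₁ ⋯ w_n` with `w_i = w i` for `1 ≤ i ≤ n`. -/
def SignedPerm (n : ℕ) : Set (Equiv.Perm ℤ) :=
  {w | (∀ i : ℤ, w (-i) = - w i) ∧ (∀ i : ℤ, (n : ℤ) < |i| → w i = i)}

/-- The inversion set `Inv(w) = {(i,j) : 1 ≤ i < j ≤ n, w_i > w_j}`. -/
noncomputable def InvSet (n : ℕ) (w : Equiv.Perm ℤ) : Finset (ℤ × ℤ) :=
  ((Finset.Icc (1 : ℤ) (n : ℤ)) ×ˢ (Finset.Icc (1 : ℤ) (n : ℤ))).filter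
    fun p => p.1 < p.2 ∧ w p.2 < w p.1

/-- The set of negative indices `Nega(w) = {i ∈ [n] : w_i < 0}`. -/
noncomputable def NegaSet (n : ℕ) (w : Equiv.Perm ℤ) : Finset ℤ :=
  (Finset.Icc (1 : ℤ) (n : ℤ)).filter fun i => w i < 0

/-- The negative sum pair set `Nsp(w) = {(i,j) : 1 ≤ i < j ≤ n, w_i + w_j < 0}`. -/
noncomputable def NspSet (n : ℕ) (w : Equiv.Perm ℤ) : Finset (ℤ × ℤ) :=
  ((Finset.Icc (1 : ℤ) (n : ℤ)) ×ˢ (Finset.Icc (1 : ℤ) (n : ℤ))).filter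
    fun p => p.1 < p.2 ∧ w p.1 + w p.2 < 0

/-- The Coxeter length of `w ∈ 𝔅ₙ`: `ℓ(w) = #Inv(w) + #Nega(w) + #Nsp(w)`. -/
noncomputable def blen (n : ℕ) (w : Equiv.Perm ℤ) : ℕ :=
  (InvSet n w).card + (NegaSet n w).card + (NspSet n w).card

/-- The left weak order on `𝔅ₙ`: `u ≤ v` iff `ℓ(v) = ℓ(u) + ℓ(v * u⁻¹)`. -/
def wle (n : ℕ) (u v : Equiv.Perm ℤ) : Prop :=
  blen n v = blen n u + blen n (v * u⁻¹)

/-- The Coxeter generators of `𝔅ₙ`: `s₀ = (1,-1)` and `sᵢ = (i,i+1)(-i,-(i+1))` for `i ≥ 1`. -/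
def sB (i : ℕ) : Equiv.Perm ℤ :=
  if i = 0 then Equiv.swap 1 (-1)
  else Equiv.swap (i : ℤ) ((i : ℤ) + 1) * Equiv.swap (-(i : ℤ)) (-((i : ℤ) + 1))

/-- `a[p] = a + p` if `a > 0`, `a - p` if `a < 0` (and `0 ↦ 0`). -/
def shiftFun (p : ℕ) (b : ℤ) : ℤ :=
  if 0 < b then b + (p : ℤ) else if b < 0 then b - (p : ℤ) else 0

/-- `w` is the shifted product `u × v ∈ 𝔅_{p+q}` of `u ∈ 𝔅_p` and `v ∈ 𝔅_q`:
its one-line notation is `(u₁, …, u_p, v₁[p], …, v_q[p])`. -/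
def IsSProd (p q : ℕ) (u v w : Equiv.Perm ℤ) : Prop :=
  w ∈ SignedPerm (p + q) ∧
  (∀ a : ℤ, 1 ≤ a → a ≤ (p : ℤ) → w a = u a) ∧
  (∀ a : ℤ, (p : ℤ) < a → a ≤ (p : ℤ) + (q : ℤ) → w a = shiftFun p (v (a - (p : ℤ))))

/-- `ξ` is a `(p,q)`-shuffle: an element of `𝔅_{p+q}` with positive entries (a permutation)
that is increasing on each of the blocks `[1,p]` and `[p+1,p+q]`. -/
def IsShuffle (p q : ℕ) (ξ : Equiv.Perm ℤ) : Prop :=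
  ξ ∈ SignedPerm (p + q) ∧
  (∀ a : ℤ, 1 ≤ a → a ≤ (p : ℤ) + (q : ℤ) → 0 < ξ a) ∧
  (∀ a b : ℤ, 1 ≤ a → a < b → b ≤ (p : ℤ) → ξ a < ξ b) ∧
  (∀ a b : ℤ, (p : ℤ) < a → a < b → b ≤ (p : ℤ) + (q : ℤ) → ξ a < ξ b)

/-- `w` is the standard signed permutation `sts(a₁ ⋯ a_m)` of the word `a₁ ⋯ a_m = a 1, …, a m`
(of nonzero integers): the unique `w ∈ 𝔅_m` with the same negative index set and
`|w_i| < |w_j| ↔ |a_i| ≤ |a_j|` for `1 ≤ i < j ≤ m`. -/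
def IsSts (m : ℕ) (a : ℤ → ℤ) (w : Equiv.Perm ℤ) : Prop :=
  w ∈ SignedPerm m ∧
  (∀ i : ℤ, 1 ≤ i → i ≤ (m : ℤ) → (w i < 0 ↔ a i < 0)) ∧
  (∀ i j : ℤ, 1 ≤ i → i < j → j ≤ (m : ℤ) → (|w i| < |w j| ↔ |a i| ≤ |a j|))

/-- The standard signed permutation of a word, as a function. -/
noncomputable def sts (m : ℕ) (a : ℤ → ℤ) : Equiv.Perm ℤ :=
  if h : ∃ w, IsSts m a w then h.choose else 1

/-- Descent set of `w ∈ 𝔅ₙ`: `Des(w) = {i ∈ [0,n-1] : w_i > w_{i+1}}` with `w₀ = 0`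
(note `w 0 = 0` holds automatically). -/
def DesSet (n : ℕ) (w : Equiv.Perm ℤ) : Finset ℕ :=
  (Finset.range n).filter fun i => w ((i : ℤ) + 1) < w (i : ℤ)

/-- Global descent set of `u ∈ 𝔅ₙ`. -/
noncomputable def GDesSet (n : ℕ) (u : Equiv.Perm ℤ) : Finset ℕ :=
  (Finset.Ico 1 n).filter fun i =>
    ∀ j k : ℤ, 1 ≤ j → j ≤ (i : ℤ) → (i : ℤ) < k → k ≤ (n : ℤ) → u k < u j

/-- `m` is the meet (greatest lower bound) of `x` and `y` within `S`, w.r.t. the weak order. -/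
def IsMeetIn (n : ℕ) (S : Set (Equiv.Perm ℤ)) (x y m : Equiv.Perm ℤ) : Prop :=
  m ∈ S ∧ wle n m x ∧ wle n m y ∧ ∀ z ∈ S, wle n z x → wle n z y → wle n z m

/-- `j` is the join (least upper bound) of `x` and `y` within `S`, w.r.t. the weak order. -/
def IsJoinIn (n : ℕ) (S : Set (Equiv.Perm ℤ)) (x y j : Equiv.Perm ℤ) : Prop :=
  j ∈ S ∧ wle n x j ∧ wle n y j ∧ ∀ z ∈ S, wle n x z → wle n y z → wle n j z

/-- The set `𝔅_p × 𝔅_{q,K} ⊆ 𝔅_{p+q}` of shifted products `u × v` with `u ∈ 𝔅_p`,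
`v ∈ 𝔅_q`, `Nega(v) = K`. -/
def SProdComp (p q : ℕ) (K : Finset ℤ) : Set (Equiv.Perm ℤ) :=
  {w | ∃ u v : Equiv.Perm ℤ, u ∈ SignedPerm p ∧ v ∈ SignedPerm q ∧ NegaSet q v = K ∧
        IsSProd p q u v w}

/-- `w` is the iterated shifted product `u⁽¹⁾ × ⋯ × u⁽ᵏ⁾` of the list `us` of signed
permutations with block sizes given by the list `ps`. -/
def IsMultiSProd (ps : List ℕ) (us : List (Equiv.Perm ℤ)) (w : Equiv.Perm ℤ) : Prop :=
  w ∈ SignedPerm ps.sum ∧ us.length = ps.length ∧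
  ∀ i < ps.length,
    us.getD i 1 ∈ SignedPerm (ps.getD i 0) ∧
    ∀ a : ℤ, ((ps.take i).sum : ℤ) < a → a ≤ ((ps.take i).sum : ℤ) + (ps.getD i 0 : ℤ) →
      w a = shiftFun ((ps.take i).sum) ((us.getD i 1) (a - ((ps.take i).sum : ℤ)))

/-- The subset `𝔅_{p₁} × 𝔅_{p₂} × ⋯ × 𝔅_{p_k}` of `𝔅_{p₁+⋯+p_k}`. -/
def MultiProdSet (ps : List ℕ) : Set (Equiv.Perm ℤ) :=
  {w | ∃ us, IsMultiSProd ps us w}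

/-- The `(L₂,…,L_k)`-component `𝔅_{p₁} × 𝔅_{p₂,L₂} × ⋯ × 𝔅_{p_k,L_k}`, where
`Ls.getD (i-1) ∅` is the prescribed negative index set of the `(i+1)`-st factor. -/
def ComponentSet (ps : List ℕ) (Ls : List (Finset ℤ)) : Set (Equiv.Perm ℤ) :=
  {w | ∃ us, IsMultiSProd ps us w ∧
        ∀ i, 1 ≤ i → i < ps.length →
          NegaSet (ps.getD i 0) (us.getD i 1) = Ls.getD (i - 1) ∅}

/-- `ξ ∈ Sh(p₁,…,p_k)`: a permutation in `𝔅_{p₁+⋯+p_k}` (all entries positive)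
increasing on each consecutive block. -/
def IsMultiShuffle (ps : List ℕ) (ξ : Equiv.Perm ℤ) : Prop :=
  ξ ∈ SignedPerm ps.sum ∧
  (∀ a : ℤ, 1 ≤ a → a ≤ (ps.sum : ℤ) → 0 < ξ a) ∧
  ∀ i < ps.length, ∀ a b : ℤ,
    ((ps.take i).sum : ℤ) < a → a < b → b ≤ ((ps.take i).sum : ℤ) + (ps.getD i 0 : ℤ) →
      ξ a < ξ b

open Equiv

/-- `e_b - e_a` is a negative root, where `e_{-i} = -e_i` and `e_0 = 0`. -/
def NegRoot (a b : ℤ) : Prop := if |a| < |b| then b < 0 else 0 < a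

lemma negRoot_iff (a b : ℤ) : NegRoot a b ↔ (|a| < |b| ∧ b < 0) ∨ (¬ |a| < |b| ∧ 0 < a) := by
  unfold NegRoot; split_ifs with h <;> simp [h]

section NegRoot

variable {a b : ℤ}

lemma negRoot_swap (h : |a| ≠ |b|) : NegRoot b a ↔ ¬ NegRoot a b := by
  simp only [negRoot_iff, Int.abs_eq_natAbs] at *; omega

lemma negRoot_neg_neg (h : |a| ≠ |b|) : NegRoot (-b) (-a) ↔ NegRoot a b := by
  simp only [negRoot_iff, abs_neg, Int.abs_eq_natAbs] at *; omega

lemma negRoot_zero_left : NegRoot 0 b ↔ b < 0 := by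
  simp only [negRoot_iff, abs_zero, Int.abs_eq_natAbs]; omega

lemma negRoot_iff_lt (h : |a| ≠ |b|) : NegRoot a b ↔ b < a := by
  simp only [negRoot_iff, Int.abs_eq_natAbs] at *; omega

lemma negRoot_neg_left_iff (h : |a| ≠ |b|) : NegRoot (-a) b ↔ a + b < 0 := by
  simp only [negRoot_iff, abs_neg, Int.abs_eq_natAbs] at *; omega

lemma abs_lt_of_negRoot_iff_negRoot_neg (h : |a| ≠ |b|)
    (he : NegRoot a b ↔ NegRoot (-a) b) : |a| < |b| := by
  simp only [negRoot_iff, abs_neg, Int.abs_eq_natAbs] at *; omega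

end NegRoot

namespace SignedPerm

variable {n : ℕ} {w : Perm ℤ}

lemma map_neg (hw : w ∈ SignedPerm n) (i : ℤ) : w (-i) = -w i := hw.1 i

lemma map_zero (hw : w ∈ SignedPerm n) : w 0 = 0 := by
  have h := hw.1 0
  rw [neg_zero] at h
  omega

lemma apply_ne_zero (hw : w ∈ SignedPerm n) {i : ℤ} (h : i ≠ 0) : w i ≠ 0 :=
  fun hi => h (w.injective (by rw [hi, map_zero hw]))

lemma abs_apply_le (hw : w ∈ SignedPerm n) {i : ℤ} (h : |i| ≤ n) : |w i| ≤ n := by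
  by_contra hc
  have hfix := w.injective (hw.2 (w i) (not_le.1 hc))
  rw [hfix] at hc
  exact hc h

lemma abs_apply_inj (hw : w ∈ SignedPerm n) {i j : ℤ} : |w i| = |w j| ↔ |i| = |j| := by
  simp only [abs_eq_abs, ← map_neg hw, w.injective.eq_iff]

lemma inv_mem (hw : w ∈ SignedPerm n) : w⁻¹ ∈ SignedPerm n :=
  ⟨fun i => w.injective (by simp [map_neg hw]),
    fun i hi => w.injective (by simp [hw.2 i hi])⟩

lemma abs_apply_le_iff (hw : w ∈ SignedPerm n) {i : ℤ} : |w i| ≤ n ↔ |i| ≤ n :=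
  ⟨fun h => by simpa using abs_apply_le (inv_mem hw) h, abs_apply_le hw⟩

lemma mul_mem {v : Perm ℤ} (hw : w ∈ SignedPerm n) (hv : v ∈ SignedPerm n) :
    w * v ∈ SignedPerm n :=
  ⟨fun i => by simp [map_neg hv, map_neg hw], fun i hi => by simp [hv.2 i hi, hw.2 i hi]⟩

end SignedPerm

/-- `(a, b)` stands for the positive root `e_b - e_a` of `B_n`. -/
noncomputable def posRoots (n : ℕ) : Finset (ℤ × ℤ) :=
  ((Icc (-n : ℤ) n) ×ˢ (Icc (1 : ℤ) n)).filter fun r => |r.1| < r.2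

noncomputable def inversions (n : ℕ) (w : Perm ℤ) : Finset (ℤ × ℤ) :=
  (posRoots n).filter fun r => NegRoot (w r.1) (w r.2)

section Inversions

variable {n : ℕ} {w : Perm ℤ}

lemma mem_posRoots {a b : ℤ} : (a, b) ∈ posRoots n ↔ |a| < b ∧ b ≤ n := by
  simp only [posRoots, mem_filter, mem_product, mem_Icc, Int.abs_eq_natAbs]
  omega

lemma mem_inversions {a b : ℤ} :
    (a, b) ∈ inversions n w ↔ (|a| < b ∧ b ≤ n) ∧ NegRoot (w a) (w b) := by
  rw [inversions, mem_filter, mem_posRoots]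

lemma zero_mem_inversions_iff (hw : w ∈ SignedPerm n) {b : ℤ} :
    (0, b) ∈ inversions n w ↔ b ∈ NegaSet n w := by
  rw [mem_inversions, SignedPerm.map_zero hw, negRoot_zero_left, NegaSet, mem_filter, mem_Icc,
    abs_zero]
  omega

lemma card_inversions_filter_pos (hw : w ∈ SignedPerm n) :
    #((inversions n w).filter fun r => 0 < r.1) = #(InvSet n w) := by
  congr 1
  ext ⟨a, b⟩
  have hab : 0 < a → a < b → |w a| ≠ |w b| := fun ha hab => by
    rw [Ne, SignedPerm.abs_apply_inj hw, abs_of_pos ha, abs_of_pos (ha.trans hab)]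
    exact hab.ne
  simp only [mem_filter, mem_inversions, InvSet, mem_product, mem_Icc]
  constructor
  · rintro ⟨⟨⟨hb, hbn⟩, hneg⟩, ha⟩
    rw [abs_of_pos ha] at hb
    exact ⟨⟨⟨ha, by omega⟩, by omega, hbn⟩, hb, (negRoot_iff_lt (hab ha hb)).1 hneg⟩
  · rintro ⟨⟨⟨ha, -⟩, -, hbn⟩, hb, hlt⟩
    exact ⟨⟨⟨by rwa [abs_of_pos ha], hbn⟩, (negRoot_iff_lt (hab ha hb)).2 hlt⟩, ha⟩

lemma card_inversions_filter_zero (hw : w ∈ SignedPerm n) :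
    #((inversions n w).filter fun r => r.1 = 0) = #(NegaSet n w) := by
  refine card_nbij' Prod.snd (fun b => (0, b)) ?_ ?_ ?_ ?_
  · rintro ⟨a, b⟩ h
    simp only [mem_coe, mem_filter] at h
    obtain ⟨hr, rfl⟩ := h
    exact (zero_mem_inversions_iff hw).1 hr
  · intro b hb
    simp only [mem_coe, mem_filter]
    exact ⟨(zero_mem_inversions_iff hw).2 hb, trivial⟩
  · rintro ⟨a, b⟩ h
    simp only [mem_coe, mem_filter] at h
    simp [h.2]
  · intro b _
    rfl

lemma card_inversions_filter_neg (hw : w ∈ SignedPerm n) :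
    #((inversions n w).filter fun r => r.1 < 0) = #(NspSet n w) := by
  have hab : ∀ a b : ℤ, 0 < a → a < b → |w a| ≠ |w b| := fun a b ha hab => by
    rw [Ne, SignedPerm.abs_apply_inj hw, abs_of_pos ha, abs_of_pos (ha.trans hab)]
    exact hab.ne
  refine card_nbij' (fun r => (-r.1, r.2)) (fun r => (-r.1, r.2)) ?_ ?_ ?_ ?_
  · rintro ⟨a, b⟩ h
    simp only [mem_coe, mem_filter, mem_inversions] at h
    obtain ⟨⟨⟨hb, hbn⟩, hneg⟩, ha⟩ := h
    rw [abs_of_neg ha] at hb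
    rw [← neg_neg a, SignedPerm.map_neg hw, negRoot_neg_left_iff (hab _ _ (by omega) hb)] at hneg
    simp only [NspSet, mem_coe, mem_filter, mem_product, mem_Icc]
    exact ⟨⟨⟨by omega, by omega⟩, by omega, hbn⟩, hb, hneg⟩
  · rintro ⟨a, b⟩ h
    simp only [NspSet, mem_coe, mem_filter, mem_product, mem_Icc] at h
    obtain ⟨⟨⟨ha, -⟩, -, hbn⟩, hb, hsum⟩ := h
    simp only [mem_coe, mem_filter, mem_inversions, SignedPerm.map_neg hw, abs_neg,
      abs_of_pos (by omega : 0 < a)]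
    exact ⟨⟨⟨hb, hbn⟩, (negRoot_neg_left_iff (hab _ _ (by omega) hb)).2 hsum⟩, by omega⟩
  all_goals intro r _; simp

lemma blen_eq_card_inversions (hw : w ∈ SignedPerm n) : blen n w = #(inversions n w) := by
  have hzero : (inversions n w).filter (fun r => ¬ 0 < r.1 ∧ r.1 = 0)
      = (inversions n w).filter (fun r => r.1 = 0) := filter_congr fun r _ => by omega
  have hneg : (inversions n w).filter (fun r => ¬ 0 < r.1 ∧ ¬ r.1 = 0)
      = (inversions n w).filter (fun r => r.1 < 0) := filter_congr fun r _ => by omega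
  rw [blen, ← card_inversions_filter_pos hw, ← card_inversions_filter_zero hw,
    ← card_inversions_filter_neg hw, add_assoc, ← hzero, ← hneg, ← filter_filter, ← filter_filter,
    card_filter_add_card_filter_not, card_filter_add_card_filter_not]

lemma SignedPerm.abs_apply_lt_of_mem_inversions_iff (hw : w ∈ SignedPerm n) {a b : ℤ}
    (hab : |a| < b) (hb : b ≤ n) (h : (a, b) ∈ inversions n w ↔ (-a, b) ∈ inversions n w) :
    |w a| < |w b| := by
  simp only [mem_inversions, abs_neg, hab, hb, and_self, true_and, SignedPerm.map_neg hw] at h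
  refine abs_lt_of_negRoot_iff_negRoot_neg ?_ h
  rw [Ne, SignedPerm.abs_apply_inj hw, abs_of_pos ((abs_nonneg a).trans_lt hab)]
  exact hab.ne

end Inversions

/-- Each root `e_d - e_c` of `B_n` occurs here twice, as `(c, d)` and as `(-d, -c)`. -/
noncomputable def rootPairs (n : ℕ) : Finset (ℤ × ℤ) :=
  ((Icc (-n : ℤ) n) ×ˢ (Icc (-n : ℤ) n)).filter fun π => |π.1| ≠ |π.2|

noncomputable def pairInversions (n : ℕ) (w : Perm ℤ) : Finset (ℤ × ℤ) :=
  (rootPairs n).filter fun π => ¬ NegRoot π.1 π.2 ∧ NegRoot (w π.1) (w π.2)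

section PairInversions

variable {n : ℕ} {u v w : Perm ℤ}

lemma mem_rootPairs {c d : ℤ} : (c, d) ∈ rootPairs n ↔ |c| ≤ n ∧ |d| ≤ n ∧ |c| ≠ |d| := by
  simp only [rootPairs, mem_filter, mem_product, mem_Icc, Int.abs_eq_natAbs]
  omega

lemma swap_mem_rootPairs {c d : ℤ} : (d, c) ∈ rootPairs n ↔ (c, d) ∈ rootPairs n := by
  simp only [mem_rootPairs, ne_comm]
  tauto

lemma apply_mem_rootPairs_iff (hw : w ∈ SignedPerm n) {c d : ℤ} :
    (w c, w d) ∈ rootPairs n ↔ (c, d) ∈ rootPairs n := by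
  simp only [mem_rootPairs, SignedPerm.abs_apply_le_iff hw, Ne, SignedPerm.abs_apply_inj hw]

lemma mem_pairInversions_iff (hw : w ∈ SignedPerm n) {c d : ℤ} :
    (c, d) ∈ pairInversions n w ↔ (c, d) ∈ inversions n w ∨ (-d, -c) ∈ inversions n w := by
  simp only [pairInversions, mem_filter, mem_rootPairs, mem_inversions, SignedPerm.map_neg hw]
  by_cases hcd : |c| = |d|
  · simp only [negRoot_iff, Int.abs_eq_natAbs] at hcd ⊢
    omega
  · rw [negRoot_neg_neg (by rwa [Ne, SignedPerm.abs_apply_inj hw])]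
    have hpos : (|c| ≤ n ∧ |d| ≤ n ∧ |c| ≠ |d|) ∧ ¬ NegRoot c d ↔
        (|c| < d ∧ d ≤ n) ∨ (|-d| < -c ∧ -c ≤ n) := by
      simp only [negRoot_iff, abs_neg, Int.abs_eq_natAbs]
      omega
    tauto

lemma inversions_eq_filter_pairInversions (hw : w ∈ SignedPerm n) :
    inversions n w = (pairInversions n w).filter fun r => |r.1| < r.2 := by
  ext ⟨c, d⟩
  rw [mem_filter, mem_pairInversions_iff hw]
  have hc : (-d, -c) ∈ inversions n w → ¬ |c| < d := by
    rw [mem_inversions, abs_neg]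
    simp only [Int.abs_eq_natAbs]
    omega
  have hr : (c, d) ∈ inversions n w → |c| < d := fun h => (mem_inversions.1 h).1.1
  tauto

lemma pairInversions_eq_union (hw : w ∈ SignedPerm n) :
    pairInversions n w = inversions n w ∪ (inversions n w).image fun r => (-r.2, -r.1) := by
  ext ⟨c, d⟩
  rw [mem_pairInversions_iff hw, mem_union, mem_image]
  refine or_congr_right ⟨fun h => ⟨(-d, -c), h, by simp⟩, ?_⟩
  rintro ⟨⟨a, b⟩, h, he⟩
  simp only [Prod.mk.injEq] at he
  rwa [← he.1, ← he.2, neg_neg, neg_neg]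

lemma card_pairInversions (hw : w ∈ SignedPerm n) :
    #(pairInversions n w) = 2 * #(inversions n w) := by
  have hdisj : Disjoint (inversions n w) ((inversions n w).image fun r => (-r.2, -r.1)) := by
    rw [disjoint_left]
    rintro ⟨c, d⟩ hcd himg
    obtain ⟨⟨a, b⟩, hab, he⟩ := mem_image.1 himg
    simp only [Prod.mk.injEq] at he
    have h1 := (mem_inversions.1 hcd).1.1
    have h2 := (mem_inversions.1 hab).1.1
    rw [← he.1, ← he.2, abs_neg] at h1
    simp only [Int.abs_eq_natAbs] at h1 h2
    omega
  have hinj : Function.Injective fun r : ℤ × ℤ => (-r.2, -r.1) := fun r s h => by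
    simp only [Prod.mk.injEq, neg_inj] at h
    exact Prod.ext h.2 h.1
  rw [pairInversions_eq_union hw, card_union_of_disjoint hdisj, card_image_of_injective _ hinj]
  ring

lemma pairInversions_subset_iff (hu : u ∈ SignedPerm n) (hv : v ∈ SignedPerm n) :
    pairInversions n u ⊆ pairInversions n v ↔ inversions n u ⊆ inversions n v := by
  refine ⟨fun h => ?_, fun h => ?_⟩
  · rw [inversions_eq_filter_pairInversions hu, inversions_eq_filter_pairInversions hv]
    exact filter_subset_filter _ h
  · rintro ⟨c, d⟩
    simp only [mem_pairInversions_iff hu, mem_pairInversions_iff hv]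
    exact Or.imp (@h _) (@h _)

/-- On `rootPairs` this is a plain bijection count: `u` permutes `rootPairs`, and `Prod.swap`
exchanges positive and negative pairs. -/
lemma card_pairInversions_mul_inv (hu : u ∈ SignedPerm n) (hv : v ∈ SignedPerm n) :
    #(pairInversions n (v * u⁻¹)) =
      #(pairInversions n v \ pairInversions n u) + #(pairInversions n u \ pairInversions n v) := by
  have hiu := SignedPerm.inv_mem hu
  have hconj : #(pairInversions n (v * u⁻¹)) = #((rootPairs n).filter fun π =>
      ¬ NegRoot (u π.1) (u π.2) ∧ NegRoot (v π.1) (v π.2)) := by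
    refine card_nbij' (Prod.map ⇑(u⁻¹) ⇑(u⁻¹)) (Prod.map u u) ?_ ?_ ?_ ?_
    · rintro ⟨c, d⟩ h
      simp only [pairInversions, mem_coe, mem_filter, Prod.map] at h ⊢
      rw [apply_mem_rootPairs_iff hiu]
      simpa using h
    · rintro ⟨c, d⟩ h
      simp only [pairInversions, mem_coe, mem_filter, Prod.map] at h ⊢
      rw [apply_mem_rootPairs_iff hu]
      simpa using h
    all_goals rintro ⟨c, d⟩ -; simp
  have hsplit : ((rootPairs n).filter fun π =>
      ¬ NegRoot (u π.1) (u π.2) ∧ NegRoot (v π.1) (v π.2))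
      = (pairInversions n v \ pairInversions n u)
        ∪ (pairInversions n u \ pairInversions n v).map (Equiv.prodComm ℤ ℤ).toEmbedding := by
    ext ⟨c, d⟩
    simp only [mem_union, mem_map_equiv, Equiv.prodComm_symm, Equiv.prodComm_apply,
      Prod.swap_prod_mk, mem_sdiff, pairInversions, mem_filter, swap_mem_rootPairs]
    by_cases hP : (c, d) ∈ rootPairs n
    · have hcd := (mem_rootPairs.1 hP).2.2
      have hucd : |u c| ≠ |u d| := by rwa [Ne, SignedPerm.abs_apply_inj hu]
      have hvcd : |v c| ≠ |v d| := by rwa [Ne, SignedPerm.abs_apply_inj hv]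
      rw [negRoot_swap hcd, negRoot_swap hucd, negRoot_swap hvcd]
      tauto
    · simp only [hP, false_and, false_or]
  have hdisj : Disjoint (pairInversions n v \ pairInversions n u)
      ((pairInversions n u \ pairInversions n v).map (Equiv.prodComm ℤ ℤ).toEmbedding) := by
    rw [disjoint_left]
    rintro ⟨c, d⟩ hl hr
    simp only [mem_map_equiv, Equiv.prodComm_symm, Equiv.prodComm_apply, Prod.swap_prod_mk,
      mem_sdiff, pairInversions, mem_filter] at hl hr
    exact hr.1.2.1 ((negRoot_swap (mem_rootPairs.1 hl.1.1).2.2).2 hl.1.2.1)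
  rw [hconj, hsplit, card_union_of_disjoint hdisj, card_map]

end PairInversions

theorem wle_iff_inversions_subset {n : ℕ} {u v : Perm ℤ} (hu : u ∈ SignedPerm n)
    (hv : v ∈ SignedPerm n) : wle n u v ↔ inversions n u ⊆ inversions n v := by
  have hvu := SignedPerm.mul_mem hv (SignedPerm.inv_mem hu)
  have hcard := card_pairInversions_mul_inv hu hv
  have hsplit_u := card_sdiff_add_card_inter (pairInversions n u) (pairInversions n v)
  have hsplit_v := card_sdiff_add_card_inter (pairInversions n v) (pairInversions n u)
  rw [card_pairInversions hu] at hsplit_u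
  rw [card_pairInversions hv, inter_comm] at hsplit_v
  rw [card_pairInversions hvu] at hcard
  rw [← pairInversions_subset_iff hu hv, ← sdiff_eq_empty_iff_subset, ← card_eq_zero, wle,
    blen_eq_card_inversions hu, blen_eq_card_inversions hv, blen_eq_card_inversions hvu]
  omega

/-- Inverse of `shiftFun p` on its image `{0} ∪ {b | p < |b|}`. -/
def unshift (p : ℕ) (b : ℤ) : ℤ :=
  if 0 < b then b - p else if b < 0 then b + p else 0

section Shift

variable {p : ℕ} {a b : ℤ}

lemma shiftFun_neg (p : ℕ) (b : ℤ) : shiftFun p (-b) = -shiftFun p b := by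
  unfold shiftFun; split_ifs <;> omega

lemma unshift_neg (p : ℕ) (b : ℤ) : unshift p (-b) = -unshift p b := by
  unfold unshift; split_ifs <;> omega

lemma shiftFun_zero (p : ℕ) : shiftFun p 0 = 0 := rfl

lemma shiftFun_of_pos (hb : 0 < b) : shiftFun p b = b + p := if_pos hb

lemma shiftFun_lt_zero_iff : shiftFun p b < 0 ↔ b < 0 := by
  unfold shiftFun; split_ifs <;> omega

lemma shiftFun_pos_iff : 0 < shiftFun p b ↔ 0 < b := by
  unfold shiftFun; split_ifs <;> omega

lemma abs_shiftFun (hb : b ≠ 0) : |shiftFun p b| = |b| + p := by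
  unfold shiftFun; split_ifs <;> simp only [Int.abs_eq_natAbs] at * <;> omega

lemma unshift_shiftFun (p : ℕ) (b : ℤ) : unshift p (shiftFun p b) = b := by
  unfold unshift shiftFun; split_ifs <;> omega

lemma shiftFun_unshift (hb : (p : ℤ) < |b|) : shiftFun p (unshift p b) = b := by
  unfold unshift shiftFun; simp only [Int.abs_eq_natAbs] at hb; split_ifs <;> omega

lemma negRoot_shiftFun (hb : b ≠ 0) : NegRoot (shiftFun p a) (shiftFun p b) ↔ NegRoot a b := by
  rcases eq_or_ne a 0 with rfl | ha
  · rw [shiftFun_zero, negRoot_zero_left, negRoot_zero_left, shiftFun_lt_zero_iff]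
  · rw [negRoot_iff, negRoot_iff, abs_shiftFun ha, abs_shiftFun hb, shiftFun_lt_zero_iff,
      shiftFun_pos_iff, add_lt_add_iff_right]

end Shift

namespace IsSProd

variable {p q : ℕ} {x y w x' y' w' : Perm ℤ}

lemma apply_of_abs_le (hx : x ∈ SignedPerm p) (hw : IsSProd p q x y w) {a : ℤ}
    (ha : |a| ≤ p) : w a = x a := by
  rcases lt_trichotomy a 0 with ha0 | rfl | ha0
  · rw [abs_of_neg ha0] at ha
    rw [← neg_neg a, SignedPerm.map_neg hw.1, SignedPerm.map_neg hx, hw.2.1 (-a) (by omega) ha]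
  · rw [SignedPerm.map_zero hw.1, SignedPerm.map_zero hx]
  · exact hw.2.1 a ha0 (by rwa [abs_of_pos ha0] at ha)

lemma apply_shiftFun (hy : y ∈ SignedPerm q) (hw : IsSProd p q x y w) {b : ℤ}
    (hb : |b| ≤ q) : w (shiftFun p b) = shiftFun p (y b) := by
  have hpos : ∀ b : ℤ, 0 < b → b ≤ q → w (shiftFun p b) = shiftFun p (y b) := fun b hb hbq => by
    rw [shiftFun_of_pos hb, hw.2.2 (b + p) (by omega) (by omega), add_sub_cancel_right]
  rcases lt_trichotomy b 0 with hb0 | rfl | hb0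
  · rw [abs_of_neg hb0] at hb
    rw [← neg_neg b, shiftFun_neg, SignedPerm.map_neg hw.1, hpos (-b) (by omega) hb,
      SignedPerm.map_neg hy, shiftFun_neg, neg_neg, neg_neg]
  · rw [shiftFun_zero, SignedPerm.map_zero hw.1, SignedPerm.map_zero hy, shiftFun_zero]
  · exact hpos b hb0 (by rwa [abs_of_pos hb0] at hb)

lemma mem_inversions_iff_of_le (hx : x ∈ SignedPerm p) (hw : IsSProd p q x y w) {a b : ℤ}
    (hb : b ≤ p) : (a, b) ∈ inversions (p + q) w ↔ (a, b) ∈ inversions p x := by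
  simp only [mem_inversions]
  by_cases hab : |a| < b
  · have hb0 : 0 < b := (abs_nonneg a).trans_lt hab
    rw [hw.apply_of_abs_le hx (by omega), hw.apply_of_abs_le hx (by rw [abs_of_pos hb0]; omega)]
    simp only [hab, hb, true_and]
    exact and_iff_right (by omega)
  · simp only [hab, false_and]

lemma shiftFun_mem_inversions_iff (hy : y ∈ SignedPerm q) (hw : IsSProd p q x y w) {a b : ℤ}
    (hb : 0 < b) : (shiftFun p a, b + p) ∈ inversions (p + q) w ↔ (a, b) ∈ inversions q y := by
  have hroot : (|shiftFun p a| < b + p ∧ b + p ≤ ((p + q : ℕ) : ℤ)) ↔ (|a| < b ∧ b ≤ q) := by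
    rcases eq_or_ne a 0 with rfl | ha
    · simp only [shiftFun_zero, abs_zero]
      omega
    · rw [abs_shiftFun ha]
      omega
  rw [mem_inversions, mem_inversions, hroot, ← shiftFun_of_pos hb]
  refine and_congr_right fun ⟨hab, hbq⟩ => ?_
  have hb' : |b| ≤ q := by rw [abs_of_pos hb]; exact hbq
  rw [hw.apply_shiftFun hy (by omega), hw.apply_shiftFun hy hb',
    negRoot_shiftFun (SignedPerm.apply_ne_zero hy hb.ne')]

lemma mem_inversions_iff_of_abs_le (hx : x ∈ SignedPerm p) (hy : y ∈ SignedPerm q)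
    (hw : IsSProd p q x y w) {a b : ℤ} (ha : |a| ≤ p) (hb : p < b) :
    (a, b) ∈ inversions (p + q) w ↔ b - p ∈ NegaSet q y := by
  rw [mem_inversions, NegaSet, mem_filter, mem_Icc]
  by_cases hbq : b ≤ p + q
  · have hy0 : y (b - p) ≠ 0 := SignedPerm.apply_ne_zero hy (by omega)
    have hxa : |x a| ≤ p := SignedPerm.abs_apply_le hx ha
    have hyb : 0 < |y (b - p)| := abs_pos.2 hy0
    rw [hw.apply_of_abs_le hx ha, hw.2.2 b hb hbq, negRoot_iff, abs_shiftFun hy0,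
      shiftFun_lt_zero_iff]
    omega
  · omega

theorem inversions_subset_iff (hx : x ∈ SignedPerm p) (hy : y ∈ SignedPerm q)
    (hx' : x' ∈ SignedPerm p) (hy' : y' ∈ SignedPerm q) (hw : IsSProd p q x y w)
    (hw' : IsSProd p q x' y' w') :
    inversions (p + q) w ⊆ inversions (p + q) w' ↔
      inversions p x ⊆ inversions p x' ∧ inversions q y ⊆ inversions q y' := by
  constructor
  · intro h
    refine ⟨fun ⟨a, b⟩ hab => ?_, fun ⟨a, b⟩ hab => ?_⟩
    · have hb := (mem_inversions.1 hab).1.2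
      rw [← hw'.mem_inversions_iff_of_le hx' hb]
      exact h ((hw.mem_inversions_iff_of_le hx hb).2 hab)
    · have hb := (abs_nonneg a).trans_lt (mem_inversions.1 hab).1.1
      rw [← hw'.shiftFun_mem_inversions_iff hy' hb]
      exact h ((hw.shiftFun_mem_inversions_iff hy hb).2 hab)
  · rintro ⟨hX, hY⟩ ⟨a, b⟩ hab
    rcases le_or_gt b p with hb | hb
    · rw [hw'.mem_inversions_iff_of_le hx' hb]
      exact hX ((hw.mem_inversions_iff_of_le hx hb).1 hab)
    rcases le_or_gt |a| p with ha | ha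
    · rw [hw'.mem_inversions_iff_of_abs_le hx' hy' ha hb, ← zero_mem_inversions_iff hy']
      rw [hw.mem_inversions_iff_of_abs_le hx hy ha hb, ← zero_mem_inversions_iff hy] at hab
      exact hY hab
    · obtain ⟨a, rfl⟩ : ∃ a', a = shiftFun p a' := ⟨unshift p a, (shiftFun_unshift ha).symm⟩
      obtain ⟨b, rfl⟩ : ∃ b', b = b' + p := ⟨b - p, by ring⟩
      rw [hw'.shiftFun_mem_inversions_iff hy' (by omega)]
      exact hY ((hw.shiftFun_mem_inversions_iff hy (by omega)).1 hab)

theorem wle_iff (hx : x ∈ SignedPerm p) (hy : y ∈ SignedPerm q) (hx' : x' ∈ SignedPerm p)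
    (hy' : y' ∈ SignedPerm q) (hw : IsSProd p q x y w) (hw' : IsSProd p q x' y' w') :
    wle (p + q) w w' ↔ wle p x x' ∧ wle q y y' := by
  rw [wle_iff_inversions_subset hw.1 hw'.1, hw.inversions_subset_iff hx hy hx' hy' hw',
    wle_iff_inversions_subset hx hx', wle_iff_inversions_subset hy hy']

end IsSProd

lemma abs_apply_lt_of_mem_sprod_interval {p q : ℕ} {u v u' v' uv uv' w : Perm ℤ}
    (hu : u ∈ SignedPerm p) (hv : v ∈ SignedPerm q) (hu' : u' ∈ SignedPerm p)
    (hv' : v' ∈ SignedPerm q) (huv : IsSProd p q u v uv) (huv' : IsSProd p q u' v' uv')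
    (hK : NegaSet q v = NegaSet q v') (hw : w ∈ SignedPerm (p + q)) (huvw : wle (p + q) uv w)
    (hwuv' : wle (p + q) w uv') {a b : ℤ} (ha : 1 ≤ a) (hap : a ≤ p) (hb : p < b)
    (hbq : b ≤ p + q) : |w a| < |w b| := by
  have hmixed : ∀ c : ℤ, |c| ≤ p → ((c, b) ∈ inversions (p + q) w ↔ b - p ∈ NegaSet q v) :=
    fun c hc =>
      ⟨fun h => hK ▸ (huv'.mem_inversions_iff_of_abs_le hu' hv' hc hb).1
          ((wle_iff_inversions_subset hw huv'.1).1 hwuv' h),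
        fun h => (wle_iff_inversions_subset huv.1 hw).1 huvw
          ((huv.mem_inversions_iff_of_abs_le hu hv hc hb).2 h)⟩
  have ha' : |a| ≤ p := by rwa [abs_of_pos (by omega)]
  refine SignedPerm.abs_apply_lt_of_mem_inversions_iff hw (by omega) (by push_cast; exact hbq) ?_
  exact (hmixed a ha').trans (hmixed (-a) (by rwa [abs_neg])).symm

lemma SignedPerm.abs_apply_le_of_abs_apply_lt {p q : ℕ} {w : Perm ℤ} (hw : w ∈ SignedPerm (p + q))
    (hsep : ∀ a b : ℤ, 1 ≤ a → a ≤ p → p < b → b ≤ p + q → |w a| < |w b|) {a : ℤ}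
    (ha : |a| ≤ p) : |w a| ≤ p := by
  rcases eq_or_ne a 0 with rfl | ha0
  · simp [map_zero hw]
  have habs : |w a| = |w (|a|)| := (abs_apply_inj hw).2 (abs_abs a).symm
  have ha1 : 1 ≤ |a| := Int.one_le_abs ha0
  have hmaps : Set.MapsTo (fun b => |w b|) (Icc (p + 1 : ℤ) (p + q)) (Ioc |w a| (p + q)) := by
    intro b hb
    simp only [coe_Icc, coe_Ioc, Set.mem_Icc, Set.mem_Ioc] at hb ⊢
    refine ⟨habs ▸ hsep _ b ha1 ha (by omega) hb.2, ?_⟩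
    exact_mod_cast abs_apply_le hw (by rw [abs_of_pos (by omega : 0 < b)]; exact_mod_cast hb.2)
  have hinj : Set.InjOn (fun b => |w b|) (Icc (p + 1 : ℤ) (p + q)) := by
    intro b hb b' hb' h
    simp only [coe_Icc, Set.mem_Icc] at hb hb'
    rwa [abs_apply_inj hw, abs_of_pos (by omega : 0 < b), abs_of_pos (by omega : 0 < b')] at h
  have hcard := card_le_card_of_injOn _ hmaps hinj
  have hwa : |w a| ≤ p + q := by exact_mod_cast abs_apply_le hw (by push_cast; omega)
  rw [Int.card_Icc, Int.card_Ioc] at hcard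
  omega

lemma abs_apply_le_iff_of_abs_apply_le {p : ℕ} {w : Perm ℤ}
    (hlow : ∀ a : ℤ, |a| ≤ p → |w a| ≤ p) (a : ℤ) : |w a| ≤ p ↔ |a| ≤ p := by
  refine ⟨fun ha => ?_, hlow a⟩
  have hmaps : Set.MapsTo w (Icc (-p : ℤ) p) (Icc (-p : ℤ) p) := fun b hb => by
    rw [coe_Icc, Set.mem_Icc, ← abs_le] at hb ⊢
    exact hlow b hb
  obtain ⟨b, hb, hba⟩ := surjOn_of_injOn_of_card_le _ hmaps w.injective.injOn le_rfl
    (by simpa only [coe_Icc, Set.mem_Icc, ← abs_le] using ha)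
  rw [w.injective hba] at hb
  simpa only [coe_Icc, Set.mem_Icc, ← abs_le] using hb

lemma shiftFun_unshift_apply_shiftFun {p : ℕ} {w : Perm ℤ} (h0 : w 0 = 0)
    (hblock : ∀ a : ℤ, |w a| ≤ p ↔ |a| ≤ p) (a : ℤ) :
    shiftFun p (unshift p (w (shiftFun p a))) = w (shiftFun p a) := by
  rcases eq_or_ne a 0 with rfl | ha
  · rw [shiftFun_zero, h0]
    rfl
  · refine shiftFun_unshift (not_le.1 fun h => ?_)
    have hle := (hblock _).1 h
    rw [abs_shiftFun ha] at hle
    have := abs_pos.2 ha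
    omega

/-- The factor of `w` on the block `{a | p < |a|}`, moved down by `p`. -/
def highFactor (p : ℕ) (w : Perm ℤ) (h0 : w 0 = 0) (hblock : ∀ a : ℤ, |w a| ≤ p ↔ |a| ≤ p) :
    Perm ℤ where
  toFun a := unshift p (w (shiftFun p a))
  invFun a := unshift p (w⁻¹ (shiftFun p a))
  left_inv a := by
    dsimp only
    rw [shiftFun_unshift_apply_shiftFun h0 hblock, ← Perm.mul_apply, inv_mul_cancel,
      Perm.one_apply, unshift_shiftFun]
  right_inv a := by
    have h0' : w⁻¹ 0 = 0 := by rw [Perm.inv_eq_iff_eq, h0]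
    have hblock' : ∀ a : ℤ, |w⁻¹ a| ≤ p ↔ |a| ≤ p := fun a => by
      rw [← hblock, ← Perm.mul_apply, mul_inv_cancel, Perm.one_apply]
    dsimp only
    rw [shiftFun_unshift_apply_shiftFun h0' hblock', ← Perm.mul_apply, mul_inv_cancel,
      Perm.one_apply, unshift_shiftFun]

lemma highFactor_apply {p : ℕ} {w : Perm ℤ} (h0 : w 0 = 0)
    (hblock : ∀ a : ℤ, |w a| ≤ p ↔ |a| ≤ p) (a : ℤ) :
    highFactor p w h0 hblock a = unshift p (w (shiftFun p a)) := rfl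

theorem exists_isSProd_of_abs_apply_le {p q : ℕ} {w : Perm ℤ} (hw : w ∈ SignedPerm (p + q))
    (hlow : ∀ a : ℤ, |a| ≤ p → |w a| ≤ p) :
    ∃ x y, x ∈ SignedPerm p ∧ y ∈ SignedPerm q ∧ IsSProd p q x y w := by
  have hblock := abs_apply_le_iff_of_abs_apply_le hlow
  have h0 := SignedPerm.map_zero hw
  let x : Perm ℤ := Perm.ofSubtype (w.subtypePerm (p := fun a : ℤ => |a| ≤ (p : ℤ)) hblock)
  have hx_apply : ∀ a, x a = if |a| ≤ p then w a else a := fun a => by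
    split_ifs with ha
    · exact Perm.ofSubtype_apply_of_mem (p := fun a : ℤ => |a| ≤ (p : ℤ)) _ ha
    · exact Perm.ofSubtype_apply_of_not_mem (p := fun a : ℤ => |a| ≤ (p : ℤ)) _ ha
  refine ⟨x, highFactor p w h0 hblock, ⟨fun a => ?_, fun a ha => ?_⟩, ⟨fun a => ?_, fun a ha => ?_⟩,
    hw, fun a ha1 hap => ?_, fun a hpa haq => ?_⟩
  · simp only [hx_apply, abs_neg, SignedPerm.map_neg hw]
    split_ifs <;> rfl
  · rw [hx_apply, if_neg (not_le.2 ha)]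
  · rw [highFactor_apply, highFactor_apply, shiftFun_neg, SignedPerm.map_neg hw, unshift_neg]
  · have ha0 : a ≠ 0 := fun h => by rw [h, abs_zero] at ha; omega
    rw [highFactor_apply, hw.2 _ (by rw [abs_shiftFun ha0]; push_cast; omega), unshift_shiftFun]
  · rw [hx_apply, if_pos (by rw [abs_of_pos (by omega)]; exact hap)]
  · have hshift : shiftFun p (a - p) = a := by rw [shiftFun_of_pos (by omega), sub_add_cancel]
    have hw_a := shiftFun_unshift_apply_shiftFun h0 hblock (a - p)
    rw [hshift] at hw_a
    rw [highFactor_apply, hshift, hw_a]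

theorem sprod_interval_general (p q : ℕ) (K : Finset ℤ) (u u' v v' uv uv' : Equiv.Perm ℤ)
    (hu : u ∈ SignedPerm p) (hu' : u' ∈ SignedPerm p)
    (hv : v ∈ SignedPerm q) (hv' : v' ∈ SignedPerm q)
    (hvK : NegaSet q v = K) (hv'K : NegaSet q v' = K)
    (huv : IsSProd p q u v uv) (huv' : IsSProd p q u' v' uv') :
    {w | ∃ x y : Equiv.Perm ℤ, x ∈ SignedPerm p ∧ wle p u x ∧ wle p x u' ∧
          y ∈ SignedPerm q ∧ wle q v y ∧ wle q y v' ∧ IsSProd p q x y w}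
      = {w | w ∈ SignedPerm (p + q) ∧ wle (p + q) uv w ∧ wle (p + q) w uv'} := by
  ext w
  constructor
  · rintro ⟨x, y, hx, hux, hxu', hy, hvy, hyv', hw⟩
    exact ⟨hw.1, (huv.wle_iff hu hv hx hy hw).2 ⟨hux, hvy⟩,
      (hw.wle_iff hx hy hu' hv' huv').2 ⟨hxu', hyv'⟩⟩
  · rintro ⟨hw, huvw, hwuv'⟩
    have hsep := fun a b => abs_apply_lt_of_mem_sprod_interval (a := a) (b := b) hu hv hu' hv'
      huv huv' (hvK.trans hv'K.symm) hw huvw hwuv'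
    obtain ⟨x, y, hx, hy, hxy⟩ :=
      exists_isSProd_of_abs_apply_le hw fun _ => SignedPerm.abs_apply_le_of_abs_apply_lt hw hsep
    obtain ⟨hux, hvy⟩ := (huv.wle_iff hu hv hx hy hxy).1 huvw
    obtain ⟨hxu', hyv'⟩ := (hxy.wle_iff hx hy hu' hv' huv').1 hwuv'
    exact ⟨x, y, hx, hux, hxu', hy, hvy, hyv', hxy⟩

/-- If `u ≤ u'` in `𝔅_p` and `v ≤ v'` in `𝔅_{q,K}`, then
`{x × y : x ∈ [u,u'], y ∈ [v,v']} = [u × v, u' × v']` in `𝔅_{p+q}`. -/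
theorem sprod_interval (p q : ℕ) (K : Finset ℤ) (u u' v v' uv uv' : Equiv.Perm ℤ)
    (hu : u ∈ SignedPerm p) (hu' : u' ∈ SignedPerm p) (huu' : wle p u u')
    (hv : v ∈ SignedPerm q) (hv' : v' ∈ SignedPerm q)
    (hvK : NegaSet q v = K) (hv'K : NegaSet q v' = K) (hvv' : wle q v v')
    (huv : IsSProd p q u v uv) (huv' : IsSProd p q u' v' uv') :
    {w | ∃ x y : Equiv.Perm ℤ, x ∈ SignedPerm p ∧ wle p u x ∧ wle p x u' ∧
          y ∈ SignedPerm q ∧ wle q v y ∧ wle q y v' ∧ IsSProd p q x y w}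
      = {w | w ∈ SignedPerm (p + q) ∧ wle (p + q) uv w ∧ wle (p + q) w uv'} :=
  sprod_interval_general p q K u u' v v' uv uv' hu hu' hv hv' hvK hv'K huv huv'
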